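/- Let α > 0 with α ∉ ℕ, and define R₁(r) = r^{2+2α}(1+r^{2+2α})^{−2} and R₂(r) = r^{2α}(1+r^{2+2α})^{−2}·(4(1+α)² g_α(r)² + g_α(r)·r), where g_α(r) = −r/(4α(1+α)(1+r^{2+2α})). Then for each i ∈ {1,2} there exist a constant C_i > 0 and a twice continuously differentiable function w_i : (0,∞) → ℝ such that w_i''(r) + w_i'(r)/r + (8(1+α)² r^{2α}(1+r^{2+2α})^{−2} − 4/r²) w_i(r) = R_i(r) for all r > 0 and |w_i(r)| ≤ C_i for all r > 0. -/

import Mathlib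

/-- `g_α(r) = -r/(4α(1+α)(1+r^{2+2α}))`. -/
noncomputable def gfun (α r : ℝ) : ℝ :=
  -r / (4 * α * (1 + α) * (1 + r ^ (2 + 2 * α)))

/-!
Both equations have explicit bounded solutions `c r² ρ^{-k}` with `ρ = 1 + r^{2+2α}`. With
`h = r^{2+2α} = ρ - 1`, the operator sends `r² ρ^{-k}` to
`4(1+α) h ρ^{-k-2} (k(k+1)(1+α) h - k(3+α) ρ + 2(1+α))`.
For `k = 1` the bracket is `(α-1)ρ`, a multiple of `R₁` as soon as `α ≠ 1`; for `k = 2` it is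
`4(αh - 1)`, a multiple of `R₂ = h ρ^{-4} (1 - αh) / (4α²(1+α))`. Both profiles are bounded by `1`
because `r² ≤ ρ`.
-/

open Set Filter

lemma hasDerivAt_rpow_const_of_pos (β : ℝ) {x : ℝ} (hx : 0 < x) :
    HasDerivAt (fun x => x ^ β) (β * x ^ β / x) x := by
  simpa only [Real.rpow_sub_one hx.ne', mul_div_assoc] using
    Real.hasDerivAt_rpow_const (p := β) (Or.inl hx.ne')

lemma rpow_two_mul_eq_div {r : ℝ} (hr : 0 < r) (α : ℝ) :
    r ^ (2 * α) = r ^ (2 + 2 * α) / r ^ 2 := by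
  rw [Real.rpow_add hr, Real.rpow_two]
  field_simp

lemma sq_le_one_add_rpow {β r : ℝ} (hβ : 2 ≤ β) (hr : 0 ≤ r) : r ^ 2 ≤ 1 + r ^ β := by
  rcases le_total r 1 with h | h
  · nlinarith [Real.rpow_nonneg hr β]
  · have h2 : r ^ (2 : ℝ) ≤ r ^ β := Real.rpow_le_rpow_of_exponent_le h hβ
    rw [Real.rpow_two] at h2
    linarith

section Profile

variable (β : ℝ) (k : ℕ) {x : ℝ}

lemma hasDerivAt_one_add_rpow_pow (hx : 0 < x) :
    HasDerivAt (fun x => (1 + x ^ β) ^ k) (k * (1 + x ^ β) ^ (k - 1) * (β * x ^ β / x)) x :=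
  ((hasDerivAt_rpow_const_of_pos β hx).const_add 1).fun_pow k

lemma hasDerivAt_sq_div_one_add_rpow_pow (hx : 0 < x) :
    HasDerivAt (fun x => x ^ 2 / (1 + x ^ β) ^ k)
      (x * (2 * (1 + x ^ β) - k * β * x ^ β) / (1 + x ^ β) ^ (k + 1)) x := by
  have hρ : 0 < 1 + x ^ β := by positivity
  refine ((hasDerivAt_pow 2 x).div (hasDerivAt_one_add_rpow_pow β k hx)
    (by positivity)).congr_deriv ?_
  rcases k with _ | k
  · field_simp
    ring
  · field_simp
    push_cast
    ring

lemma hasDerivAt_mul_div_one_add_rpow_pow (hx : 0 < x) :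
    HasDerivAt (fun x => x * (2 * (1 + x ^ β) - k * β * x ^ β) / (1 + x ^ β) ^ (k + 1))
      ((2 + (2 - k * β) * (1 + β) * x ^ β) / (1 + x ^ β) ^ (k + 1)
        - (k + 1) * β * x ^ β * (2 + (2 - k * β) * x ^ β) / (1 + x ^ β) ^ (k + 2)) x := by
  have hρ : 0 < 1 + x ^ β := by positivity
  have hpow := hasDerivAt_rpow_const_of_pos β hx
  have hnum : HasDerivAt (fun x => x * (2 * (1 + x ^ β) - k * β * x ^ β))
      (2 + (2 - k * β) * (1 + β) * x ^ β) x := by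
    refine ((hasDerivAt_id' x).mul (((hpow.const_add 1).const_mul 2).fun_sub
      (hpow.const_mul (k * β)))).congr_deriv ?_
    field_simp
    ring
  refine (hnum.div (hasDerivAt_one_add_rpow_pow β (k + 1) hx) (by positivity)).congr_deriv ?_
  field_simp
  push_cast
  ring

end Profile

noncomputable def bubbleOp (α : ℝ) (w : ℝ → ℝ) (r : ℝ) : ℝ :=
  deriv (deriv w) r + deriv w r / r
    + (8 * (1 + α) ^ 2 * r ^ (2 * α) / (1 + r ^ (2 + 2 * α)) ^ 2 - 4 / r ^ 2) * w r

lemma bubbleOp_const_mul (α c : ℝ) (w : ℝ → ℝ) (r : ℝ) :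
    bubbleOp α (fun x => c * w x) r = c * bubbleOp α w r := by
  simp only [bubbleOp, deriv_const_mul_field']
  ring

noncomputable def bubbleProfile (α : ℝ) (k : ℕ) (r : ℝ) : ℝ :=
  r ^ 2 / (1 + r ^ (2 + 2 * α)) ^ k

lemma bubbleOp_bubbleProfile (α : ℝ) (k : ℕ) {r : ℝ} (hr : 0 < r) :
    bubbleOp α (bubbleProfile α k) r
      = 4 * (1 + α) * r ^ (2 + 2 * α) / (1 + r ^ (2 + 2 * α)) ^ (k + 2)
        * (k * (k + 1) * (1 + α) * r ^ (2 + 2 * α) - k * (3 + α) * (1 + r ^ (2 + 2 * α))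
          + 2 * (1 + α)) := by
  have hderiv : deriv (bubbleProfile α k) =ᶠ[nhds r] _ :=
    eventually_of_mem (Ioi_mem_nhds hr) fun x hx =>
      (hasDerivAt_sq_div_one_add_rpow_pow (2 + 2 * α) k hx).deriv
  rw [bubbleOp, hderiv.deriv_eq, (hasDerivAt_mul_div_one_add_rpow_pow (2 + 2 * α) k hr).deriv,
    hderiv.self_of_nhds, bubbleProfile, rpow_two_mul_eq_div hr]
  have hρ : 0 < 1 + r ^ (2 + 2 * α) := by positivity
  field_simp
  ring

lemma bubbleProfile_nonneg (α : ℝ) (k : ℕ) {r : ℝ} (hr : 0 < r) : 0 ≤ bubbleProfile α k r := by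
  unfold bubbleProfile
  positivity

lemma bubbleProfile_le_one {α : ℝ} (hα : 0 ≤ α) {k : ℕ} (hk : k ≠ 0) {r : ℝ} (hr : 0 < r) :
    bubbleProfile α k r ≤ 1 := by
  have hρ : 1 ≤ 1 + r ^ (2 + 2 * α) := le_add_of_nonneg_right (by positivity)
  rw [bubbleProfile, div_le_one (by positivity)]
  calc r ^ 2 ≤ 1 + r ^ (2 + 2 * α) := sq_le_one_add_rpow (by linarith) hr.le
    _ ≤ (1 + r ^ (2 + 2 * α)) ^ k := le_self_pow₀ hρ hk

lemma contDiffOn_bubbleProfile (α : ℝ) (k : ℕ) {n : WithTop ℕ∞} :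
    ContDiffOn ℝ n (bubbleProfile α k) (Ioi 0) := fun x (hx : 0 < x) =>
  ((contDiffAt_id.pow 2).div ((contDiffAt_const.add
    (Real.contDiffAt_rpow_const_of_ne hx.ne')).pow k) (by positivity)).contDiffWithinAt

lemma exists_bounded_bubbleOp_eq {α : ℝ} (hα : 0 ≤ α) {k : ℕ} (hk : k ≠ 0) (c : ℝ)
    {R : ℝ → ℝ} (hR : ∀ r, 0 < r → c * bubbleOp α (bubbleProfile α k) r = R r) :
    ∃ C : ℝ, 0 < C ∧ ∃ w : ℝ → ℝ, ContDiffOn ℝ 2 w (Ioi 0) ∧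
      (∀ r, 0 < r → bubbleOp α w r = R r) ∧ ∀ r, 0 < r → |w r| ≤ C := by
  refine ⟨|c| + 1, by positivity, fun x => c * bubbleProfile α k x,
    contDiffOn_const.mul (contDiffOn_bubbleProfile α k),
    fun r hr => (bubbleOp_const_mul α c _ r).trans (hR r hr), fun r hr => ?_⟩
  rw [abs_mul, abs_of_nonneg (bubbleProfile_nonneg α k hr)]
  nlinarith [abs_nonneg c, bubbleProfile_nonneg α k hr, bubbleProfile_le_one hα hk hr]

/-- bounded solutions `w₁`, `w₂` of the frequency-2 forced
linearized equation at the standard bubble with the forcings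
`R₁(r) = r^{2+2α}(1+r^{2+2α})^{-2}` and
`R₂(r) = r^{2α}(1+r^{2+2α})^{-2}(4(1+α)²g_α(r)² + g_α(r)r)`. -/
theorem stmt11 (α : ℝ) (hα : 0 < α) (hαN : ∀ n : ℕ, α ≠ (n : ℝ)) :
    (∃ C₁ : ℝ, 0 < C₁ ∧
      ∃ w₁ : ℝ → ℝ, ContDiffOn ℝ 2 w₁ (Set.Ioi 0) ∧
        (∀ r : ℝ, 0 < r →
          deriv (deriv w₁) r + deriv w₁ r / r
            + (8 * (1 + α) ^ 2 * r ^ (2 * α) / (1 + r ^ (2 + 2 * α)) ^ 2 - 4 / r ^ 2)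
              * w₁ r
          = r ^ (2 + 2 * α) / (1 + r ^ (2 + 2 * α)) ^ 2) ∧
        (∀ r : ℝ, 0 < r → |w₁ r| ≤ C₁)) ∧
    (∃ C₂ : ℝ, 0 < C₂ ∧
      ∃ w₂ : ℝ → ℝ, ContDiffOn ℝ 2 w₂ (Set.Ioi 0) ∧
        (∀ r : ℝ, 0 < r →
          deriv (deriv w₂) r + deriv w₂ r / r
            + (8 * (1 + α) ^ 2 * r ^ (2 * α) / (1 + r ^ (2 + 2 * α)) ^ 2 - 4 / r ^ 2)
              * w₂ r
          = r ^ (2 * α) / (1 + r ^ (2 + 2 * α)) ^ 2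
              * (4 * (1 + α) ^ 2 * gfun α r ^ 2 + gfun α r * r)) ∧
        (∀ r : ℝ, 0 < r → |w₂ r| ≤ C₂)) := by
  have hα1 : α - 1 ≠ 0 := sub_ne_zero.mpr (by exact_mod_cast hαN 1)
  refine ⟨exists_bounded_bubbleOp_eq hα.le one_ne_zero (1 / (4 * (1 + α) * (α - 1)))
      fun r hr => ?_,
    exists_bounded_bubbleOp_eq hα.le two_ne_zero (-1 / (64 * α ^ 2 * (1 + α) ^ 2))
      fun r hr => ?_⟩
  all_goals
    have hρ : 0 < 1 + r ^ (2 + 2 * α) := by positivity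
    rw [bubbleOp_bubbleProfile α _ hr]
  · field_simp
    ring
  · rw [gfun, rpow_two_mul_eq_div hr]
    field_simp
    ring
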